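/- arXiv:2204.11185 — 2 statements merged into one kernel-verified Lean document; each statement's English description precedes it below -/
import Mathlib

section
/- For fixed a ≥ 0 and p, q ≥ 1, the function c : R → R defined by c(z) = (a + |z|^p)^{q/p} is convex, nonnegative, and symmetric (even). -/
open Set

theorem cost_convex_nonneg_even (a p q : ℝ) (ha : 0 ≤ a) (hp : 1 ≤ p) (hq : 1 ≤ q) :
    ConvexOn ℝ Set.univ (fun z : ℝ => (a + |z| ^ p) ^ (q / p)) ∧
    (∀ z : ℝ, 0 ≤ (a + |z| ^ p) ^ (q / p)) ∧
    (∀ z : ℝ, (a + |(-z)| ^ p) ^ (q / p) = (a + |z| ^ p) ^ (q / p)) := by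
  have hp0 : (0:ℝ) < p := lt_of_lt_of_le one_pos hp
  have hnn : ∀ z : ℝ, (0:ℝ) ≤ a + |z| ^ p := fun z =>
    add_nonneg ha (Real.rpow_nonneg (abs_nonneg z) p)
  refine ⟨?_, fun z => Real.rpow_nonneg (hnn z) _, fun z => by rw [abs_neg]⟩
  -- Convexity
  set P : ENNReal := ENNReal.ofReal p with hP
  haveI : Fact (1 ≤ P) := ⟨by
    rw [hP, ← ENNReal.ofReal_one]
    exact ENNReal.ofReal_le_ofReal hp⟩
  have hPt : P.toReal = p := ENNReal.toReal_ofReal hp0.le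
  set c : ℝ := a ^ (1/p) with hc
  have hc0 : 0 ≤ c := Real.rpow_nonneg ha _
  have hcp : c ^ p = a := by
    rw [hc, ← Real.rpow_mul ha, one_div_mul_cancel hp0.ne', Real.rpow_one]
  set f : ℝ → WithLp P (ℝ × ℝ) := fun z => (WithLp.equiv P (ℝ × ℝ)).symm (c, z) with hf
  have hnorm : ∀ z : ℝ, ‖f z‖ = (a + |z| ^ p) ^ (1/p) := by
    intro z
    rw [hf]
    rw [WithLp.prod_norm_eq_add (by rw [hPt]; exact hp0)]
    rw [hPt]
    have h1 : ((WithLp.equiv P (ℝ × ℝ)).symm (c, z)).fst = c := rfl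
    have h2 : ((WithLp.equiv P (ℝ × ℝ)).symm (c, z)).snd = z := rfl
    rw [h1, h2, Real.norm_of_nonneg hc0, Real.norm_eq_abs, hcp]
  have hfa : ∀ (x y t s : ℝ), t + s = 1 →
      f (t * x + s * y) = t • f x + s • f y := by
    intro x y t s hts
    rw [hf]
    simp only
    show WithLp.toLp P _ = t • WithLp.toLp P _ + s • WithLp.toLp P _
    rw [← WithLp.toLp_smul, ← WithLp.toLp_smul, ← WithLp.toLp_add]
    congr 1
    rw [Prod.smul_mk, Prod.smul_mk, Prod.mk_add_mk]
    simp only [smul_eq_mul]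
    rw [← add_mul, hts, one_mul]
  have hconv : ConvexOn ℝ Set.univ (fun z : ℝ => ‖f z‖) := by
    refine ⟨convex_univ, fun x _ y _ t s ht hs hts => ?_⟩
    simp only [smul_eq_mul]
    calc ‖f (t * x + s * y)‖ = ‖t • f x + s • f y‖ := by rw [hfa x y t s hts]
      _ ≤ ‖t • f x‖ + ‖s • f y‖ := norm_add_le _ _
      _ = t * ‖f x‖ + s * ‖f y‖ := by
          rw [norm_smul, norm_smul, Real.norm_of_nonneg ht, Real.norm_of_nonneg hs]
  have hcomp : ConvexOn ℝ Set.univ (fun z : ℝ => ‖f z‖ ^ q) := by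
    refine ⟨convex_univ, fun x _ y _ t s ht hs hts => ?_⟩
    simp only [smul_eq_mul]
    calc ‖f (t * x + s * y)‖ ^ q ≤ (t * ‖f x‖ + s * ‖f y‖) ^ q := by
          refine Real.rpow_le_rpow (norm_nonneg _) ?_ (le_trans zero_le_one hq)
          have := hconv.2 (mem_univ x) (mem_univ y) ht hs hts
          simpa using this
      _ ≤ t * ‖f x‖ ^ q + s * ‖f y‖ ^ q := by
          have := (convexOn_rpow hq).2 (mem_Ici.mpr (norm_nonneg (f x)))
            (mem_Ici.mpr (norm_nonneg (f y))) ht hs hts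
          simpa using this
  have heq : (fun z : ℝ => (a + |z| ^ p) ^ (q / p)) =
      (fun z : ℝ => ‖f z‖ ^ q) := by
    funext z
    simp only [hnorm z]
    rw [← Real.rpow_mul (hnn z), one_div, inv_mul_eq_div]
  rw [heq]
  exact hcomp
end

section
/- Let c : R → R be a convex nonnegative function. Then for probability measures μ, ν on R (with the relevant integrals finite), the optimal transport cost inf_{π ∈ Π(μ,ν)} ∫ c(s − t) dπ(s,t) equals ∫_0^1 c(F_μ^{-1}(t) − F_ν^{-1}(t)) dt, where F_μ^{-1} and F_ν^{-1} are the quantile functions. -/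
open MeasureTheory ProbabilityTheory

/-- Optimal transport cost between two measures for a given cost function. -/
noncomputable def Wcost {α : Type*} [MeasurableSpace α] (cost : α → α → ℝ)
    (μ ν : Measure α) : ℝ :=
  sInf {r : ℝ | ∃ π : Measure (α × α),
    π.map Prod.fst = μ ∧ π.map Prod.snd = ν ∧ r = ∫ z, cost z.1 z.2 ∂π}

/-- The Wasserstein distance `W_{q,p}` on measures on `ℝ^d` with ground metric `ℓ_p`. -/
noncomputable def Wqp (q p : ℝ) {d : ℕ} (μ ν : Measure (Fin d → ℝ)) : ℝ :=
  (Wcost (fun u v => (∑ i, |u i - v i| ^ p) ^ (q / p)) μ ν) ^ (1 / q)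

/-- Quantile function (generalized inverse of the CDF). -/
noncomputable def quantile (μ : Measure ℝ) (t : ℝ) : ℝ :=
  sInf {u : ℝ | t ≤ cdf μ u}

set_option linter.unusedSectionVars false
set_option linter.unnecessarySimpa false
set_option linter.unusedVariables false
set_option linter.unusedTactic false

open Set Filter
open scoped Topology ENNReal

section Quantile

variable (μ : Measure ℝ) [IsProbabilityMeasure μ]

lemma quantile_set_nonempty {t : ℝ} (ht : t < 1) : {u : ℝ | t ≤ cdf μ u}.Nonempty := by
  have h := tendsto_cdf_atTop μ
  have : ∀ᶠ u in atTop, t < cdf μ u := h.eventually_const_lt ht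
  rcases this.exists with ⟨u, hu⟩
  exact ⟨u, hu.le⟩

lemma quantile_set_bddBelow {t : ℝ} (ht : 0 < t) : BddBelow {u : ℝ | t ≤ cdf μ u} := by
  have h := tendsto_cdf_atBot μ
  have : ∀ᶠ u in atBot, cdf μ u < t := h.eventually_lt_const ht
  rcases this.exists with ⟨u₀, hu₀⟩
  refine ⟨u₀, fun v hv => ?_⟩
  by_contra hlt
  push_neg at hlt
  exact absurd (hv.trans (monotone_cdf μ hlt.le)) (not_le.2 hu₀)

lemma quantile_le_iff {t u : ℝ} (ht : t ∈ Ioo (0:ℝ) 1) :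
    quantile μ t ≤ u ↔ t ≤ cdf μ u := by
  constructor
  · intro h
    have hs : t ≤ cdf μ (quantile μ t) := by
      by_contra hc
      push_neg at hc
      have hrc : ContinuousWithinAt (cdf μ) (Ici (quantile μ t)) (quantile μ t) :=
        (cdf μ).right_continuous _
      have hev : ∀ᶠ v in 𝓝[≥] (quantile μ t), cdf μ v < t :=
        hrc.eventually_lt_const hc
      rcases (mem_nhdsGE_iff_exists_Ico_subset).1 hev with ⟨b, hb, hsub⟩
      -- every element of the set is ≥ b
      have hlb : ∀ v ∈ {u : ℝ | t ≤ cdf μ u}, b ≤ v := by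
        intro v hv
        by_contra hvb
        push_neg at hvb
        have hvq : quantile μ t ≤ v := csInf_le (quantile_set_bddBelow μ ht.1) hv
        have hlt := hsub ⟨hvq, hvb⟩
        simp only [mem_setOf_eq] at hv
        exact absurd hv (not_le.2 hlt)
      have : b ≤ quantile μ t := le_csInf (quantile_set_nonempty μ ht.2) hlb
      exact absurd hb (not_lt.2 this)
    exact hs.trans (monotone_cdf μ h)
  · intro h
    exact csInf_le (quantile_set_bddBelow μ ht.1) h

/-- measurable modification of the quantile function -/
noncomputable def Qm (μ : Measure ℝ) : ℝ → ℝ :=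
  fun t => if 0 < t ∧ t < 1 then quantile μ t else 0

lemma Qm_eq {t : ℝ} (ht : t ∈ Ioo (0:ℝ) 1) : Qm μ t = quantile μ t := by
  simp [Qm, ht.1, ht.2]

lemma Qm_le_iff {t u : ℝ} (ht : t ∈ Ioo (0:ℝ) 1) :
    Qm μ t ≤ u ↔ t ≤ cdf μ u := by
  rw [Qm_eq μ ht]; exact quantile_le_iff μ ht

lemma measurable_Qm : Measurable (Qm μ) := by
  apply measurable_of_Iic
  intro u
  have : Qm μ ⁻¹' Iic u =
      (Ioo (0:ℝ) 1 ∩ Iic (cdf μ u)) ∪ ((Ioo (0:ℝ) 1)ᶜ ∩ {t : ℝ | (0:ℝ) ≤ u}) := by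
    ext t
    by_cases ht : t ∈ Ioo (0:ℝ) 1
    · simp only [mem_preimage, mem_Iic, mem_union, mem_inter_iff, ht, mem_compl_iff,
        not_true_eq_false, false_and, or_false, true_and]
      exact Qm_le_iff μ ht
    · have : Qm μ t = 0 := by
        simp only [Qm, mem_Ioo, not_and_or, not_lt] at ht ⊢
        rcases ht with h | h
        · simp [not_lt.2 h]
        · have : ¬ (0 < t ∧ t < 1) := by
            rintro ⟨h1, h2⟩; exact absurd h (not_le.2 h2)
          simp [this]
      simp [mem_preimage, this, ht, mem_inter_iff]
    
  rw [this]
  have h2 : MeasurableSet {t : ℝ | (0:ℝ) ≤ u} := by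
    by_cases h : (0:ℝ) ≤ u
    · simp only [h]; simpa using MeasurableSet.univ
    · simp only [h]; simpa using MeasurableSet.empty
  exact ((measurableSet_Ioo.inter measurableSet_Iic).union
    (measurableSet_Ioo.compl.inter h2))

end Quantile

section Coupling

/-- uniform measure on (0,1) -/
noncomputable def unif01 : Measure ℝ := volume.restrict (Ioo (0:ℝ) 1)

instance : IsProbabilityMeasure unif01 := by
  constructor
  rw [unif01, Measure.restrict_apply MeasurableSet.univ, univ_inter, Real.volume_Ioo]
  norm_num

lemma volume_Ioo_inter_Iic {x : ℝ} (h0 : 0 ≤ x) (h1 : x ≤ 1) :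
    volume (Ioo (0:ℝ) 1 ∩ Iic x) = ENNReal.ofReal x := by
  rcases lt_or_ge x 1 with hx | hx
  · have : Ioo (0:ℝ) 1 ∩ Iic x = Ioc 0 x := by
      ext t
      simp only [mem_inter_iff, mem_Ioo, mem_Iic, mem_Ioc]
      constructor
      · rintro ⟨⟨h1', _⟩, h3⟩; exact ⟨h1', h3⟩
      · rintro ⟨h1', h2⟩; exact ⟨⟨h1', lt_of_le_of_lt h2 hx⟩, h2⟩
    rw [this, Real.volume_Ioc, sub_zero]
  · have hx1 : x = 1 := le_antisymm h1 hx
    subst hx1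
    have : Ioo (0:ℝ) 1 ∩ Iic 1 = Ioo (0:ℝ) 1 := by
      apply inter_eq_self_of_subset_left
      intro t ht; exact le_of_lt ht.2
    rw [this, Real.volume_Ioo]; norm_num

variable (μ ν : Measure ℝ) [IsProbabilityMeasure μ] [IsProbabilityMeasure ν]

lemma unif01_Qm_le (u : ℝ) :
    unif01 {t : ℝ | Qm μ t ≤ u} = μ (Iic u) := by
  rw [unif01, Measure.restrict_apply₀']
  · have : {t : ℝ | Qm μ t ≤ u} ∩ Ioo (0:ℝ) 1 = Iic (cdf μ u) ∩ Ioo (0:ℝ) 1 := by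
      ext t
      simp only [mem_inter_iff, mem_setOf_eq, mem_Iic, and_congr_left_iff]
      intro ht
      exact Qm_le_iff μ ht
    rw [this, inter_comm, volume_Ioo_inter_Iic (cdf_nonneg μ u) (cdf_le_one μ u),
      ofReal_cdf μ u]
  · exact measurableSet_Ioo.nullMeasurableSet

lemma map_Qm_eq : unif01.map (Qm μ) = μ := by
  have hmeas := measurable_Qm μ
  haveI : IsProbabilityMeasure (unif01.map (Qm μ)) :=
    Measure.isProbabilityMeasure_map hmeas.aemeasurable
  apply MeasureTheory.Measure.ext_of_Iic
  intro a
  rw [Measure.map_apply hmeas measurableSet_Iic]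
  exact unif01_Qm_le μ a

/-- the quantile coupling -/
noncomputable def piHat (μ ν : Measure ℝ) : Measure (ℝ × ℝ) :=
  unif01.map (fun t => (Qm μ t, Qm ν t))

lemma measurable_Qm_pair : Measurable (fun t => (Qm μ t, Qm ν t)) :=
  (measurable_Qm μ).prodMk (measurable_Qm ν)

instance : IsProbabilityMeasure (piHat μ ν) :=
  Measure.isProbabilityMeasure_map (measurable_Qm_pair μ ν).aemeasurable

lemma piHat_fst : (piHat μ ν).map Prod.fst = μ := by
  rw [piHat, Measure.map_map measurable_fst (measurable_Qm_pair μ ν)]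
  exact map_Qm_eq μ

lemma piHat_snd : (piHat μ ν).map Prod.snd = ν := by
  rw [piHat, Measure.map_map measurable_snd (measurable_Qm_pair μ ν)]
  exact map_Qm_eq ν

lemma piHat_Iic (a b : ℝ) :
    piHat μ ν (Iic a ×ˢ Iic b) = min (μ (Iic a)) (ν (Iic b)) := by
  rw [piHat, Measure.map_apply (measurable_Qm_pair μ ν)
    (measurableSet_Iic.prod measurableSet_Iic)]
  have hpre : (fun t => (Qm μ t, Qm ν t)) ⁻¹' (Iic a ×ˢ Iic b) =
      {t : ℝ | Qm μ t ≤ a ∧ Qm ν t ≤ b} := by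
    ext t; simp [Set.mem_prod]
  rw [hpre, unif01, Measure.restrict_apply₀' measurableSet_Ioo.nullMeasurableSet]
  have : {t : ℝ | Qm μ t ≤ a ∧ Qm ν t ≤ b} ∩ Ioo (0:ℝ) 1 =
      Iic (min (cdf μ a) (cdf ν b)) ∩ Ioo (0:ℝ) 1 := by
    ext t
    simp only [mem_inter_iff, mem_setOf_eq, mem_Iic, le_min_iff, and_congr_left_iff]
    intro ht
    rw [Qm_le_iff μ ht, Qm_le_iff ν ht]
  rw [this, inter_comm, volume_Ioo_inter_Iic
      (le_min (cdf_nonneg μ a) (cdf_nonneg ν b))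
      (min_le_of_left_le (cdf_le_one μ a)),
    ← ofReal_cdf μ a, ← ofReal_cdf ν b]
  rcases le_total (cdf μ a) (cdf ν b) with h | h
  · rw [min_eq_left h, min_eq_left (ENNReal.ofReal_le_ofReal h)]
  · rw [min_eq_right h, min_eq_right (ENNReal.ofReal_le_ofReal h)]

lemma coupling_isProbability (π : Measure (ℝ × ℝ))
    (h1 : π.map Prod.fst = μ) : IsProbabilityMeasure π := by
  constructor
  have : π.map Prod.fst univ = π univ := by
    rw [Measure.map_apply measurable_fst MeasurableSet.univ, preimage_univ]
  rw [← this, h1, measure_univ]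

lemma coupling_Iic_le (π : Measure (ℝ × ℝ))
    (h1 : π.map Prod.fst = μ) (h2 : π.map Prod.snd = ν) (a b : ℝ) :
    π (Iic a ×ˢ Iic b) ≤ min (μ (Iic a)) (ν (Iic b)) := by
  apply le_min
  · calc π (Iic a ×ˢ Iic b) ≤ π (Prod.fst ⁻¹' Iic a) := by
          apply measure_mono; intro z hz; exact hz.1
      _ = μ (Iic a) := by
          rw [← Measure.map_apply measurable_fst measurableSet_Iic, h1]
  · calc π (Iic a ×ˢ Iic b) ≤ π (Prod.snd ⁻¹' Iic b) := by
          apply measure_mono; intro z hz; exact hz.2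
      _ = ν (Iic b) := by
          rw [← Measure.map_apply measurable_snd measurableSet_Iic, h2]

end Coupling

section Slicing

variable (μ ν : Measure ℝ) [IsProbabilityMeasure μ] [IsProbabilityMeasure ν]

lemma slice_right (ρ : Measure (ℝ × ℝ)) [IsProbabilityMeasure ρ]
    (h2 : ρ.map Prod.snd = ν) (x : ℝ) :
    ∫⁻ z, ENNReal.ofReal (z.1 - z.2 - x) ∂ρ
      = ∫⁻ r, (ν (Iic (r - x)) - ρ (Iic r ×ˢ Iic (r - x))) ∂volume := by
  set S : Set ((ℝ × ℝ) × ℝ) := {q | q.1.2 + x ≤ q.2 ∧ q.2 < q.1.1} with hS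
  have hSmeas : MeasurableSet S := by
    apply MeasurableSet.inter
    · exact measurableSet_le ((measurable_snd.comp measurable_fst).add measurable_const)
        measurable_snd
    · exact measurableSet_lt measurable_snd (measurable_fst.comp measurable_fst)
  have step1 : ∀ z : ℝ × ℝ, ENNReal.ofReal (z.1 - z.2 - x)
      = ∫⁻ r, S.indicator 1 (z, r) ∂volume := by
    intro z
    have h1 : (fun r => S.indicator 1 (z, r)) = (Ico (z.2 + x) z.1).indicator (1 : ℝ → ℝ≥0∞) := by
      funext r
      simp only [indicator_apply, hS, mem_setOf_eq, mem_Ico, Pi.one_apply]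
    rw [h1, lintegral_indicator_one measurableSet_Ico, Real.volume_Ico]
    ring_nf
  have step2 : ∫⁻ z, ENNReal.ofReal (z.1 - z.2 - x) ∂ρ
      = ∫⁻ r, ∫⁻ z, S.indicator 1 (z, r) ∂ρ ∂volume := by
    rw [show (fun z : ℝ × ℝ => ENNReal.ofReal (z.1 - z.2 - x))
        = fun z => ∫⁻ r, S.indicator 1 (z, r) ∂volume from funext step1]
    apply lintegral_lintegral_swap
    exact ((measurable_one.indicator hSmeas).aemeasurable)
  rw [step2]
  apply lintegral_congr
  intro r
  have h1 : (fun z : ℝ × ℝ => S.indicator 1 (z, r))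
      = ({z : ℝ × ℝ | z.2 ≤ r - x ∧ r < z.1}).indicator (1 : ℝ × ℝ → ℝ≥0∞) := by
    funext z
    simp only [indicator_apply, hS, mem_setOf_eq]
    congr 1
    simp only [eq_iff_iff]
    constructor
    · rintro ⟨h, h'⟩; exact ⟨by linarith, h'⟩
    · rintro ⟨h, h'⟩; exact ⟨by linarith, h'⟩
  have hset : MeasurableSet {z : ℝ × ℝ | z.2 ≤ r - x ∧ r < z.1} := by
    apply MeasurableSet.inter
    · exact measurableSet_le measurable_snd measurable_const
    · exact measurableSet_lt measurable_const measurable_fst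
  rw [h1, lintegral_indicator_one hset]
  have hdiff : {z : ℝ × ℝ | z.2 ≤ r - x ∧ r < z.1}
      = (Prod.snd ⁻¹' Iic (r - x)) \ (Iic r ×ˢ Iic (r - x)) := by
    ext z
    simp only [mem_setOf_eq, mem_diff, mem_preimage, mem_Iic, Set.mem_prod]
    constructor
    · rintro ⟨h, h'⟩
      exact ⟨h, fun hc => absurd h' (not_lt.2 hc.1)⟩
    · rintro ⟨h, h'⟩
      refine ⟨h, ?_⟩
      by_contra hc
      push_neg at hc
      exact h' ⟨hc, h⟩
  rw [hdiff, measure_diff]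
  · congr 1
    rw [← Measure.map_apply measurable_snd measurableSet_Iic, h2]
  · intro z hz
    exact hz.2
  · exact (measurableSet_Iic.prod measurableSet_Iic).nullMeasurableSet
  · exact measure_ne_top ρ _

lemma slice_left (ρ : Measure (ℝ × ℝ)) [IsProbabilityMeasure ρ]
    (h1 : ρ.map Prod.fst = μ) (x : ℝ) :
    ∫⁻ z, ENNReal.ofReal (z.2 - z.1 - x) ∂ρ
      = ∫⁻ r, (μ (Iic (r - x)) - ρ (Iic (r - x) ×ˢ Iic r)) ∂volume := by
  set S : Set ((ℝ × ℝ) × ℝ) := {q | q.1.1 + x ≤ q.2 ∧ q.2 < q.1.2} with hS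
  have hSmeas : MeasurableSet S := by
    apply MeasurableSet.inter
    · exact measurableSet_le ((measurable_fst.comp measurable_fst).add measurable_const)
        measurable_snd
    · exact measurableSet_lt measurable_snd (measurable_snd.comp measurable_fst)
  have step1 : ∀ z : ℝ × ℝ, ENNReal.ofReal (z.2 - z.1 - x)
      = ∫⁻ r, S.indicator 1 (z, r) ∂volume := by
    intro z
    have h1' : (fun r => S.indicator 1 (z, r)) = (Ico (z.1 + x) z.2).indicator (1 : ℝ → ℝ≥0∞) := by
      funext r
      simp only [indicator_apply, hS, mem_setOf_eq, mem_Ico, Pi.one_apply]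
    rw [h1', lintegral_indicator_one measurableSet_Ico, Real.volume_Ico]
    ring_nf
  have step2 : ∫⁻ z, ENNReal.ofReal (z.2 - z.1 - x) ∂ρ
      = ∫⁻ r, ∫⁻ z, S.indicator 1 (z, r) ∂ρ ∂volume := by
    rw [show (fun z : ℝ × ℝ => ENNReal.ofReal (z.2 - z.1 - x))
        = fun z => ∫⁻ r, S.indicator 1 (z, r) ∂volume from funext step1]
    apply lintegral_lintegral_swap
    exact ((measurable_one.indicator hSmeas).aemeasurable)
  rw [step2]
  apply lintegral_congr
  intro r
  have h1' : (fun z : ℝ × ℝ => S.indicator 1 (z, r))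
      = ({z : ℝ × ℝ | z.1 ≤ r - x ∧ r < z.2}).indicator (1 : ℝ × ℝ → ℝ≥0∞) := by
    funext z
    simp only [indicator_apply, hS, mem_setOf_eq]
    congr 1
    simp only [eq_iff_iff]
    constructor
    · rintro ⟨h, h'⟩; exact ⟨by linarith, h'⟩
    · rintro ⟨h, h'⟩; exact ⟨by linarith, h'⟩
  have hset : MeasurableSet {z : ℝ × ℝ | z.1 ≤ r - x ∧ r < z.2} := by
    apply MeasurableSet.inter
    · exact measurableSet_le measurable_fst measurable_const
    · exact measurableSet_lt measurable_const measurable_snd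
  rw [h1', lintegral_indicator_one hset]
  have hdiff : {z : ℝ × ℝ | z.1 ≤ r - x ∧ r < z.2}
      = (Prod.fst ⁻¹' Iic (r - x)) \ (Iic (r - x) ×ˢ Iic r) := by
    ext z
    simp only [mem_setOf_eq, mem_diff, mem_preimage, mem_Iic, Set.mem_prod]
    constructor
    · rintro ⟨h, h'⟩
      exact ⟨h, fun hc => absurd h' (not_lt.2 hc.2)⟩
    · rintro ⟨h, h'⟩
      refine ⟨h, ?_⟩
      by_contra hc
      push_neg at hc
      exact h' ⟨h, hc⟩
  rw [hdiff, measure_diff]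
  · congr 1
    rw [← Measure.map_apply measurable_fst measurableSet_Iic, h1]
  · intro z hz
    exact hz.1
  · exact (measurableSet_Iic.prod measurableSet_Iic).nullMeasurableSet
  · exact measure_ne_top ρ _

lemma hinge_right_le (π : Measure (ℝ × ℝ))
    (h1 : π.map Prod.fst = μ) (h2 : π.map Prod.snd = ν) (x : ℝ) :
    ∫⁻ z, ENNReal.ofReal (z.1 - z.2 - x) ∂(piHat μ ν)
      ≤ ∫⁻ z, ENNReal.ofReal (z.1 - z.2 - x) ∂π := by
  haveI := coupling_isProbability μ π h1
  rw [slice_right ν (piHat μ ν) (piHat_snd μ ν) x, slice_right ν π h2 x]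
  refine lintegral_mono fun r => ?_
  dsimp only
  rw [piHat_Iic μ ν r (r - x)]
  exact tsub_le_tsub_left (coupling_Iic_le μ ν π h1 h2 r (r - x)) _

lemma hinge_left_le (π : Measure (ℝ × ℝ))
    (h1 : π.map Prod.fst = μ) (h2 : π.map Prod.snd = ν) (x : ℝ) :
    ∫⁻ z, ENNReal.ofReal (z.2 - z.1 - x) ∂(piHat μ ν)
      ≤ ∫⁻ z, ENNReal.ofReal (z.2 - z.1 - x) ∂π := by
  haveI := coupling_isProbability μ π h1
  rw [slice_left μ (piHat μ ν) (piHat_fst μ ν) x, slice_left μ π h1 x]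
  refine lintegral_mono fun r => ?_
  dsimp only
  rw [piHat_Iic μ ν (r - x) r]
  exact tsub_le_tsub_left (coupling_Iic_le μ ν π h1 h2 (r - x) r) _

section RDeriv

noncomputable def rderiv (f : ℝ → ℝ) (x : ℝ) : ℝ := sInf (slope f x '' Ioi x)

variable {f : ℝ → ℝ} (hf : ConvexOn ℝ univ f)
include hf

lemma slope_adj {v x y : ℝ} (hvx : v < x) (hxy : x < y) : slope f v x ≤ slope f x y := by
  rw [slope_def_field, slope_def_field]
  exact hf.slope_mono_adjacent (mem_univ v) (mem_univ y) hvx hxy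

lemma slope_bddBelow (x : ℝ) : BddBelow (slope f x '' Ioi x) := by
  refine ⟨slope f (x - 1) x, ?_⟩
  rintro b ⟨y, hy, rfl⟩
  exact slope_adj hf (by linarith) hy

lemma rderiv_le_slope {x y : ℝ} (hxy : x < y) : rderiv f x ≤ slope f x y :=
  csInf_le (slope_bddBelow hf x) ⟨y, hxy, rfl⟩

lemma slope_le_rderiv {v x : ℝ} (hvx : v < x) : slope f v x ≤ rderiv f x :=
  le_csInf ⟨_, ⟨x + 1, mem_Ioi.2 (by linarith), rfl⟩⟩
    (by rintro b ⟨y, hy, rfl⟩; exact slope_adj hf hvx hy)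

lemma rderiv_support (x u : ℝ) : f x + rderiv f x * (u - x) ≤ f u := by
  rcases lt_trichotomy x u with h | h | h
  · have h1 : rderiv f x ≤ (f u - f x) / (u - x) := by
      have := rderiv_le_slope hf h
      rwa [slope_def_field] at this
    have h2 : rderiv f x * (u - x) ≤ f u - f x := by
      rw [le_div_iff₀ (by linarith : (0:ℝ) < u - x)] at h1
      linarith
    linarith
  · subst h; simp
  · have h1 : (f x - f u) / (x - u) ≤ rderiv f x := by
      have := slope_le_rderiv hf h
      rwa [slope_def_field] at this
    have h2 : f x - f u ≤ rderiv f x * (x - u) := by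
      rw [div_le_iff₀ (by linarith : (0:ℝ) < x - u)] at h1
      linarith
    have : rderiv f x * (u - x) = -(rderiv f x * (x - u)) := by ring
    linarith
 
lemma rderiv_mono : Monotone (rderiv f) := by
  intro x y hxy
  rcases eq_or_lt_of_le hxy with rfl | hxy
  · exact le_refl _
  refine le_csInf ⟨_, ⟨y + 1, mem_Ioi.2 (by linarith), rfl⟩⟩ ?_
  rintro b ⟨z, hz, rfl⟩
  calc rderiv f x ≤ slope f x z := rderiv_le_slope hf (hxy.trans hz)
    _ ≤ slope f y z := by
        rw [slope_comm f x z, slope_comm f y z, slope_def_field, slope_def_field]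
        exact hf.secant_mono (mem_univ z) (mem_univ x) (mem_univ y)
          (by intro h; rw [h] at hxy; exact absurd (mem_Ioi.1 hz) (lt_asymm hxy))
          (ne_of_lt hz) hxy.le

lemma rderiv_hasDerivWithinAt (x : ℝ) :
    HasDerivWithinAt f (rderiv f x) (Ioi x) x := by
  rw [hasDerivWithinAt_iff_tendsto_slope' notMem_Ioi_self]
  have hmono : MonotoneOn (slope f x) (Ioi x) := by
    intro y hy z hz hyz
    rw [slope_def_field, slope_def_field]
    exact hf.secant_mono (mem_univ x) (mem_univ y) (mem_univ z)
      (ne_of_gt hy) (ne_of_gt hz) hyz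
  exact hmono.tendsto_nhdsGT (slope_bddBelow hf x)

lemma convex_continuous : Continuous f := by
  have := hf.locallyLipschitz
  exact this.continuous

lemma rderiv_ftc {a b : ℝ} (hab : a ≤ b) :
    ∫ r in a..b, rderiv f r = f b - f a := by
  apply intervalIntegral.integral_eq_sub_of_hasDeriv_right_of_le hab
    (convex_continuous hf).continuousOn
    (fun x _ => rderiv_hasDerivWithinAt hf x)
    ((rderiv_mono hf).intervalIntegrable)

lemma rderiv_nonneg_of_monotone (hm : Monotone f) (x : ℝ) : 0 ≤ rderiv f x := by
  refine le_csInf ⟨_, ⟨x + 1, mem_Ioi.2 (by linarith), rfl⟩⟩ ?_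
  rintro b ⟨y, hy, rfl⟩
  rw [slope_def_field]
  have hy' := mem_Ioi.1 hy
  apply div_nonneg (by linarith [hm (le_of_lt hy')]) (by linarith)

end RDeriv

section MainRep

lemma rep_monotone {f : ℝ → ℝ} (hf : ConvexOn ℝ univ f) (hm : Monotone f)
    (hpos : ∀ u, 0 ≤ f u) (hlim : Tendsto f atBot (𝓝 0)) :
    ∃ γ : Measure ℝ, SigmaFinite γ ∧
      ∀ u, ENNReal.ofReal (f u) = ∫⁻ x, ENNReal.ofReal (u - x) ∂γ := by
  have hσm : Monotone (rderiv f) := rderiv_mono hf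
  set SF : StieltjesFunction ℝ := hσm.stieltjesFunction with hSF
  set γ : Measure ℝ := SF.measure with hγ
  refine ⟨γ, by infer_instance, ?_⟩
  have hσ0 : ∀ x, 0 ≤ rderiv f x := rderiv_nonneg_of_monotone hf hm
  have hSF0 : ∀ x, 0 ≤ SF x := fun x =>
    le_trans (hσ0 x) (by rw [hSF, hσm.stieltjesFunction_eq]; exact hσm.le_rightLim le_rfl)
  have hSFle : ∀ x y, x < y → SF x ≤ rderiv f y := fun x y hxy => by
    rw [hSF, hσm.stieltjesFunction_eq]; exact hσm.rightLim_le hxy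
  -- SF agrees a.e. with rderiv f
  have h_ae : ∀ᵐ x ∂(volume : Measure ℝ), SF x = rderiv f x := by
    have hcnt : Set.Countable {x | ¬ContinuousAt (rderiv f) x} :=
      hσm.countable_not_continuousAt
    have hz : (volume : Measure ℝ) {x | ¬ContinuousAt (rderiv f) x} = 0 :=
      hcnt.measure_zero _
    rw [← MeasureTheory.compl_mem_ae_iff] at hz
    filter_upwards [hz] with x hx
    have hcont : ContinuousAt (rderiv f) x := by simpa using hx
    rw [hSF, hσm.stieltjesFunction_eq]
    exact rightLim_eq_of_tendsto
      (hcont.tendsto.mono_left nhdsWithin_le_nhds)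
  intro u
  -- the key finite-window formula
  have key : ∀ a : ℝ, a < u → ∫⁻ x in Ioi a, ENNReal.ofReal (u - x) ∂γ
      = ENNReal.ofReal (f u - f a - SF a * (u - a)) := by
    intro a hau
    set T : Set (ℝ × ℝ) := {p | a < p.1 ∧ p.1 ≤ p.2 ∧ p.2 < u} with hT
    have hTmeas : MeasurableSet T := by
      apply MeasurableSet.inter
      · exact measurableSet_lt measurable_const measurable_fst
      · exact (measurableSet_le measurable_fst measurable_snd).inter
          (measurableSet_lt measurable_snd measurable_const)
    have inner1 : ∀ x : ℝ, (∫⁻ r, T.indicator 1 (x, r) ∂volume)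
        = (Ioi a).indicator (fun x => ENNReal.ofReal (u - x)) x := by
      intro x
      by_cases hx : a < x
      · have h1 : (fun r => T.indicator 1 (x, r)) = (Ico x u).indicator (1 : ℝ → ℝ≥0∞) := by
          funext r
          simp only [indicator_apply, hT, mem_setOf_eq, mem_Ico, hx, true_and, Pi.one_apply]
        rw [h1, lintegral_indicator_one measurableSet_Ico, Real.volume_Ico,
          indicator_of_mem (mem_Ioi.2 hx)]
      · have h1 : (fun r => T.indicator 1 (x, r)) = fun _ => (0 : ℝ≥0∞) := by
          funext r
          simp only [indicator_apply, hT, mem_setOf_eq]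
          rw [if_neg]; tauto
        rw [h1, lintegral_zero, indicator_of_notMem (by simpa using hx)]
    have inner2 : ∀ r : ℝ, (∫⁻ x, T.indicator 1 (x, r) ∂γ)
        = (Iio u).indicator (fun r => γ (Ioc a r)) r := by
      intro r
      by_cases hr : r < u
      · have h1 : (fun x => T.indicator 1 (x, r)) = (Ioc a r).indicator (1 : ℝ → ℝ≥0∞) := by
          funext x
          simp only [indicator_apply, hT, mem_setOf_eq, mem_Ioc, hr, and_true, Pi.one_apply]
        rw [h1, lintegral_indicator_one measurableSet_Ioc, indicator_of_mem (mem_Iio.2 hr)]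
      · have h1 : (fun x => T.indicator 1 (x, r)) = fun _ => (0 : ℝ≥0∞) := by
          funext x
          simp only [indicator_apply, hT, mem_setOf_eq]
          rw [if_neg]; tauto
        rw [h1, lintegral_zero, indicator_of_notMem (by simpa using hr)]
    have hswap : ∫⁻ x, ∫⁻ r, T.indicator 1 (x, r) ∂volume ∂γ
        = ∫⁻ r, ∫⁻ x, T.indicator 1 (x, r) ∂γ ∂volume :=
      lintegral_lintegral_swap ((measurable_one.indicator hTmeas).aemeasurable)
    have step1 : ∫⁻ x in Ioi a, ENNReal.ofReal (u - x) ∂γ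
        = ∫⁻ r in Iio u, γ (Ioc a r) ∂volume := by
      rw [← lintegral_indicator measurableSet_Ioi,
        ← lintegral_indicator measurableSet_Iio]
      rw [show ((Ioi a).indicator fun x => ENNReal.ofReal (u - x))
          = fun x => ∫⁻ r, T.indicator 1 (x, r) ∂volume from funext fun x => (inner1 x).symm]
      rw [hswap]
      exact lintegral_congr inner2
    rw [step1]
    have hIoc : ∀ r : ℝ, γ (Ioc a r) = ENNReal.ofReal (SF r - SF a) := fun r => by
      rw [hγ, StieltjesFunction.measure_Ioc]
    simp_rw [hIoc]
    have hsplit : Iio u = Iic a ∪ Ioo a u := by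
      ext r
      simp only [mem_Iio, mem_union, mem_Iic, mem_Ioo]
      constructor
      · intro h
        rcases le_or_gt r a with h' | h'
        · exact Or.inl h'
        · exact Or.inr ⟨h', h⟩
      · rintro (h | ⟨_, h⟩)
        · exact lt_of_le_of_lt h hau
        · exact h
    have hdisj : Disjoint (Iic a) (Ioo a u) :=
      Set.disjoint_left.2 fun r hr hr' => absurd hr'.1 (not_lt.2 hr)
    rw [hsplit, lintegral_union measurableSet_Ioo hdisj]
    have hzero : ∫⁻ r in Iic a, ENNReal.ofReal (SF r - SF a) ∂volume = 0 := by
      rw [setLIntegral_congr_fun measurableSet_Iic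
        ((fun r (hr : r ≤ a) =>
          by rw [ENNReal.ofReal_eq_zero.2 (sub_nonpos.2 (SF.mono hr))] : ∀ r ∈ Iic a,
            ENNReal.ofReal (SF r - SF a) = (0:ℝ≥0∞)))]
      simp
    rw [hzero, zero_add]
    have hInt : IntegrableOn (fun r => SF r - SF a) (Ioo a u) volume := by
      have h1 : IntervalIntegrable SF volume a u := SF.mono.intervalIntegrable
      rw [intervalIntegrable_iff_integrableOn_Ioc_of_le hau.le] at h1
      apply Integrable.sub (h1.mono_set Ioo_subset_Ioc_self)
      refine integrableOn_const (lt_top_iff_ne_top.1 ?_)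
      rw [Real.volume_Ioo]
      exact ENNReal.ofReal_lt_top
    have hnn : 0 ≤ᵐ[volume.restrict (Ioo a u)] fun r => SF r - SF a := by
      rw [EventuallyLE, ae_restrict_iff' measurableSet_Ioo]
      exact ae_of_all _ fun r hr => sub_nonneg.2 (SF.mono hr.1.le)
    rw [← ofReal_integral_eq_lintegral_ofReal hInt hnn]
    congr 1
    have hIntSF : IntegrableOn SF (Ioo a u) volume := by
      have h1 : IntervalIntegrable SF volume a u := SF.mono.intervalIntegrable
      rw [intervalIntegrable_iff_integrableOn_Ioc_of_le hau.le] at h1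
      exact h1.mono_set Ioo_subset_Ioc_self
    have hIntC : IntegrableOn (fun _ => SF a) (Ioo a u) volume := by
      refine integrableOn_const (lt_top_iff_ne_top.1 ?_)
      rw [Real.volume_Ioo]
      exact ENNReal.ofReal_lt_top
    rw [integral_sub hIntSF hIntC]
    have h2 : ∫ r in Ioo a u, SF r ∂volume = ∫ r in Ioo a u, rderiv f r ∂volume :=
      integral_congr_ae (ae_restrict_of_ae (h_ae.mono fun x hx => by rw [hx]))
    have h3 : ∫ r in Ioo a u, rderiv f r ∂volume = f u - f a := by
      rw [← MeasureTheory.integral_Ioc_eq_integral_Ioo,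
        ← intervalIntegral.integral_of_le hau.le]
      exact rderiv_ftc hf hau.le
    have h4 : ∫ _ in Ioo a u, SF a ∂volume = (u - a) * SF a := by
      rw [setIntegral_const, measureReal_def, Real.volume_Ioo, ENNReal.toReal_ofReal (by linarith), smul_eq_mul]
    rw [h2, h3, h4]
    ring
  -- take the limit a → -∞ along a = u - 1 - n
  set g : ℝ → ℝ≥0∞ := fun x => ENNReal.ofReal (u - x) with hg
  have hgmeas : Measurable g := by
    apply Measurable.ennreal_ofReal
    exact measurable_const.sub measurable_id
  have htotal : ∫⁻ x, g x ∂γ = ⨆ n : ℕ, ∫⁻ x in Ioi (u - 1 - n), g x ∂γ := by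
    have hpt : ∀ x, g x = ⨆ n : ℕ, (Ioi (u - 1 - (n:ℝ))).indicator g x := by
      intro x
      rcases exists_nat_gt (u - 1 - x) with ⟨n, hn⟩
      apply le_antisymm
      · apply le_iSup_of_le n
        rw [indicator_of_mem (mem_Ioi.2 (by linarith))]
      · exact iSup_le fun n => indicator_le_self _ _ x
    calc ∫⁻ x, g x ∂γ = ∫⁻ x, ⨆ n : ℕ, (Ioi (u - 1 - (n:ℝ))).indicator g x ∂γ :=
          lintegral_congr hpt
      _ = ⨆ n : ℕ, ∫⁻ x, (Ioi (u - 1 - (n:ℝ))).indicator g x ∂γ := by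
          apply lintegral_iSup
          · exact fun n => hgmeas.indicator measurableSet_Ioi
          · intro n m hnm
            apply indicator_le_indicator_of_subset
            · apply Ioi_subset_Ioi
              have : (n : ℝ) ≤ m := Nat.cast_le.2 hnm
              linarith
            · exact fun x => zero_le
      _ = ⨆ n : ℕ, ∫⁻ x in Ioi (u - 1 - (n:ℝ)), g x ∂γ := by
          refine iSup_congr fun n => ?_
          rw [lintegral_indicator measurableSet_Ioi]
  rw [htotal]
  have hkey : ∀ n : ℕ, ∫⁻ x in Ioi (u - 1 - (n:ℝ)), g x ∂γ
      = ENNReal.ofReal (f u - f (u - 1 - n) - SF (u - 1 - n) * (u - (u - 1 - n))) :=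
    fun n => key (u - 1 - n) (by push_cast; linarith [Nat.cast_nonneg (α := ℝ) n])
  simp_rw [hkey]
  -- limit computation
  have hatBot : Tendsto (fun n : ℕ => u - 1 - (n:ℝ)) atTop atBot := by
    apply tendsto_atBot_add_const_left
    exact tendsto_neg_atBot_iff.2 tendsto_natCast_atTop_atTop
  have t1 : Tendsto (fun n : ℕ => f (u - 1 - n)) atTop (𝓝 0) := hlim.comp hatBot
  have t2 : Tendsto (fun n : ℕ => SF (u - 1 - n) * (u - (u - 1 - n))) atTop (𝓝 0) := by
    have hb : ∀ᶠ n : ℕ in atTop, SF (u - 1 - n) * (u - (u - 1 - n))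
        ≤ 4 * f ((u - 1 - n + u) / 2) := by
      filter_upwards [eventually_ge_atTop 3] with n hn
      set a : ℝ := u - 1 - n with ha
      have hn3 : (3:ℝ) ≤ (n:ℝ) := by exact_mod_cast hn
      have hua : 4 ≤ u - a := by rw [ha]; linarith
      set m : ℝ := (a + u) / 2 with hm'
      have hm1 : a + 1 < m := by rw [hm']; linarith
      have hsupp := rderiv_support hf (a + 1) m
      have hσnn : 0 ≤ rderiv f (a + 1) := hσ0 _
      have hSFa : SF a ≤ rderiv f (a + 1) := hSFle a (a+1) (by linarith)
      have hfm : rderiv f (a + 1) * (m - (a + 1)) ≤ f m := by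
        have := hpos (a + 1)
        linarith
      have h4 : u - a ≤ 4 * (m - (a + 1)) := by rw [hm']; linarith
      calc SF a * (u - a) ≤ rderiv f (a + 1) * (u - a) :=
            mul_le_mul_of_nonneg_right hSFa (by linarith)
        _ ≤ rderiv f (a + 1) * (4 * (m - (a + 1))) :=
            mul_le_mul_of_nonneg_left h4 hσnn
        _ = 4 * (rderiv f (a + 1) * (m - (a + 1))) := by ring
        _ ≤ 4 * f m := by linarith
    have hb0 : ∀ᶠ n : ℕ in atTop, 0 ≤ SF (u - 1 - n) * (u - (u - 1 - n)) := by
      filter_upwards [eventually_ge_atTop 0] with n _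
      apply mul_nonneg (hSF0 _)
      have : (0:ℝ) ≤ (n:ℝ) := Nat.cast_nonneg n
      linarith
    have hub : Tendsto (fun n : ℕ => 4 * f ((u - 1 - n + u) / 2)) atTop (𝓝 0) := by
      have harg : Tendsto (fun n : ℕ => (u - 1 - (n:ℝ) + u) / 2) atTop atBot := by
        apply Tendsto.atBot_div_const (by norm_num)
        apply tendsto_atBot_add_const_right
        exact hatBot
      have := (hlim.comp harg).const_mul (4:ℝ)
      simpa using this
    exact tendsto_of_tendsto_of_tendsto_of_le_of_le' tendsto_const_nhds hub hb0 hb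
  have tmain : Tendsto (fun n : ℕ => ENNReal.ofReal
      (f u - f (u - 1 - n) - SF (u - 1 - n) * (u - (u - 1 - n)))) atTop
      (𝓝 (ENNReal.ofReal (f u))) := by
    apply (ENNReal.continuous_ofReal.tendsto _).comp
    have : Tendsto (fun n : ℕ => f u - f (u - 1 - n) - SF (u - 1 - n) * (u - (u - 1 - n)))
        atTop (𝓝 (f u - 0 - 0)) := (tendsto_const_nhds.sub t1).sub t2
    simpa using this
  have hmono : Monotone (fun n : ℕ => ENNReal.ofReal
      (f u - f (u - 1 - n) - SF (u - 1 - n) * (u - (u - 1 - n)))) := by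
    intro n m hnm
    dsimp only
    rw [← hkey n, ← hkey m]
    apply lintegral_mono_set
    apply Ioi_subset_Ioi
    have : (n : ℝ) ≤ m := Nat.cast_le.2 hnm
    linarith
  exact tendsto_nhds_unique tmain (tendsto_atTop_iSup hmono)

end MainRep

section CP

variable (μ ν : Measure ℝ) [IsProbabilityMeasure μ] [IsProbabilityMeasure ν]
  (π : Measure (ℝ × ℝ)) (hπ1 : π.map Prod.fst = μ) (hπ2 : π.map Prod.snd = ν)

include hπ1 hπ2

lemma CP_gen_right {f : ℝ → ℝ} (hf : ConvexOn ℝ univ f) (hm : Monotone f)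
    (hpos : ∀ u, 0 ≤ f u) (hlim : Tendsto f atBot (𝓝 0)) :
    ∫⁻ z, ENNReal.ofReal (f (z.1 - z.2)) ∂(piHat μ ν)
      ≤ ∫⁻ z, ENNReal.ofReal (f (z.1 - z.2)) ∂π := by
  haveI := coupling_isProbability μ π hπ1
  obtain ⟨γ, hγfin, hrep⟩ := rep_monotone hf hm hpos hlim
  haveI := hγfin
  have hrw : ∀ ρ : Measure (ℝ × ℝ), IsProbabilityMeasure ρ →
      ∫⁻ z, ENNReal.ofReal (f (z.1 - z.2)) ∂ρ
        = ∫⁻ x, ∫⁻ z : ℝ × ℝ, ENNReal.ofReal (z.1 - z.2 - x) ∂ρ ∂γ := by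
    intro ρ _
    have h1 : ∫⁻ z, ENNReal.ofReal (f (z.1 - z.2)) ∂ρ
        = ∫⁻ z : ℝ × ℝ, ∫⁻ x, ENNReal.ofReal (z.1 - z.2 - x) ∂γ ∂ρ :=
      lintegral_congr fun z => hrep (z.1 - z.2)
    rw [h1]
    apply lintegral_lintegral_swap
    apply Measurable.aemeasurable
    apply Measurable.ennreal_ofReal
    exact (measurable_fst.fst.sub measurable_fst.snd).sub measurable_snd
  rw [hrw π (by infer_instance), hrw (piHat μ ν) (by infer_instance)]
  exact lintegral_mono fun x => hinge_right_le μ ν π hπ1 hπ2 x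

lemma CP_gen_left {f : ℝ → ℝ} (hf : ConvexOn ℝ univ f) (hm : Monotone f)
    (hpos : ∀ u, 0 ≤ f u) (hlim : Tendsto f atBot (𝓝 0)) :
    ∫⁻ z, ENNReal.ofReal (f (z.2 - z.1)) ∂(piHat μ ν)
      ≤ ∫⁻ z, ENNReal.ofReal (f (z.2 - z.1)) ∂π := by
  haveI := coupling_isProbability μ π hπ1
  obtain ⟨γ, hγfin, hrep⟩ := rep_monotone hf hm hpos hlim
  haveI := hγfin
  have hrw : ∀ ρ : Measure (ℝ × ℝ), IsProbabilityMeasure ρ →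
      ∫⁻ z, ENNReal.ofReal (f (z.2 - z.1)) ∂ρ
        = ∫⁻ x, ∫⁻ z : ℝ × ℝ, ENNReal.ofReal (z.2 - z.1 - x) ∂ρ ∂γ := by
    intro ρ _
    have h1 : ∫⁻ z, ENNReal.ofReal (f (z.2 - z.1)) ∂ρ
        = ∫⁻ z : ℝ × ℝ, ∫⁻ x, ENNReal.ofReal (z.2 - z.1 - x) ∂γ ∂ρ :=
      lintegral_congr fun z => hrep (z.2 - z.1)
    rw [h1]
    apply lintegral_lintegral_swap
    apply Measurable.aemeasurable
    apply Measurable.ennreal_ofReal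
    exact (measurable_fst.snd.sub measurable_fst.fst).sub measurable_snd
  rw [hrw π (by infer_instance), hrw (piHat μ ν) (by infer_instance)]
  exact lintegral_mono fun x => hinge_left_le μ ν π hπ1 hπ2 x

end CP

section ConvexHelpers

lemma convexOn_comp_neg {c : ℝ → ℝ} (hc : ConvexOn ℝ univ c) :
    ConvexOn ℝ univ (fun u => c (-u)) := by
  refine ⟨convex_univ, fun x _ y _ a b ha hb hab => ?_⟩
  have h := hc.2 (mem_univ (-x)) (mem_univ (-y)) ha hb hab
  have harg : a • (-x) + b • (-y) = -(a • x + b • y) := by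
    simp only [smul_eq_mul]; ring
  rw [harg] at h
  simpa using h

lemma convexOn_sub_const {c : ℝ → ℝ} (hc : ConvexOn ℝ univ c) (k : ℝ) :
    ConvexOn ℝ univ (fun u => c u - k) := by
  have := hc.add_const (-k)
  rw [show (fun u => c u - k) = c + fun _ => -k from funext fun u => sub_eq_add_neg _ _]
  exact this

lemma convexOn_comp_max {c : ℝ → ℝ} (hc : ConvexOn ℝ univ c) {w : ℝ}
    (hmono : MonotoneOn c (Ici w)) :
    ConvexOn ℝ univ (fun u => c (max u w)) := by
  refine ⟨convex_univ, fun x _ y _ a b ha hb hab => ?_⟩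
  have h1 : max (a • x + b • y) w ≤ a • max x w + b • max y w := by
    apply max_le
    · apply add_le_add
      · exact smul_le_smul_of_nonneg_left (le_max_left x w) ha
      · exact smul_le_smul_of_nonneg_left (le_max_left y w) hb
    · calc w = a • w + b • w := by
            simp only [smul_eq_mul]; linear_combination (-w) * hab
        _ ≤ a • max x w + b • max y w := add_le_add
            (smul_le_smul_of_nonneg_left (le_max_right x w) ha)
            (smul_le_smul_of_nonneg_left (le_max_right y w) hb)
  have h2 : w ≤ max (a • x + b • y) w := le_max_right _ _
  have h3 : w ≤ a • max x w + b • max y w := h2.trans h1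
  calc c (max (a • x + b • y) w) ≤ c (a • max x w + b • max y w) :=
        hmono h2 h3 h1
    _ ≤ a • c (max x w) + b • c (max y w) :=
        hc.2 (mem_univ _) (mem_univ _) ha hb hab

lemma antitone_of_rderiv_neg {c : ℝ → ℝ} (hc : ConvexOn ℝ univ c)
    (h : ∀ x, rderiv c x < 0) : Antitone c := by
  intro x y hxy
  rcases eq_or_lt_of_le hxy with rfl | hxy
  · exact le_refl _
  have h1 : slope c x y ≤ rderiv c y := slope_le_rderiv hc hxy
  have h2 : slope c x y < 0 := lt_of_le_of_lt h1 (h y)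
  rw [slope_def_field, div_neg_iff] at h2
  rcases h2 with ⟨_, h2⟩ | ⟨h2, _⟩
  · linarith
  · linarith

lemma monotone_of_rderiv_unbdd {c : ℝ → ℝ} (hc : ConvexOn ℝ univ c)
    (h : ∀ b : ℝ, ∃ v ≤ b, 0 ≤ rderiv c v) : Monotone c := by
  intro x y hxy
  rcases eq_or_lt_of_le hxy with rfl | hxy
  · exact le_refl _
  obtain ⟨v, hvx, hv0⟩ := h x
  have h1 : rderiv c x ≤ slope c x y := rderiv_le_slope hc hxy
  have h2 : 0 ≤ slope c x y := le_trans (le_trans hv0 (rderiv_mono hc hvx)) h1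
  rw [slope_def_field] at h2
  rcases div_nonneg_iff.1 h2 with ⟨hnum, _⟩ | ⟨_, hden⟩
  · linarith
  · linarith

section CPMain

variable (μ ν : Measure ℝ) [IsProbabilityMeasure μ] [IsProbabilityMeasure ν]
  (π : Measure (ℝ × ℝ)) (hπ1 : π.map Prod.fst = μ) (hπ2 : π.map Prod.snd = ν)

include hπ1 hπ2

lemma CP_mono_case {c : ℝ → ℝ} (hc : ConvexOn ℝ univ c) (hnn : ∀ z, 0 ≤ c z)
    (hm : Monotone c) :
    ∫⁻ z, ENNReal.ofReal (c (z.1 - z.2)) ∂(piHat μ ν)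
      ≤ ∫⁻ z, ENNReal.ofReal (c (z.1 - z.2)) ∂π := by
  haveI := coupling_isProbability μ π hπ1
  set κ := ⨅ u, c u with hκ
  have hbdd : BddBelow (range c) := ⟨0, by rintro _ ⟨u, rfl⟩; exact hnn u⟩
  have hκ0 : 0 ≤ κ := le_ciInf fun u => hnn u
  have hκle : ∀ u, κ ≤ c u := fun u => ciInf_le hbdd u
  set f := fun u => c u - κ with hfdef
  have hfconv : ConvexOn ℝ univ f := convexOn_sub_const hc κ
  have hfm : Monotone f := fun x y hxy => sub_le_sub_right (hm hxy) κ
  have hf0 : ∀ u, 0 ≤ f u := fun u => sub_nonneg.2 (hκle u)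
  have hflim : Tendsto f atBot (𝓝 (0:ℝ)) := by
    have h := (tendsto_atBot_ciInf hm hbdd).sub_const κ
    simpa [hκ] using h
  have hpt : ∀ z : ℝ × ℝ, ENNReal.ofReal (c (z.1 - z.2))
      = ENNReal.ofReal κ + ENNReal.ofReal (f (z.1 - z.2)) := by
    intro z
    rw [← ENNReal.ofReal_add hκ0 (hf0 _)]
    congr 1
    rw [hfdef]; ring
  have hfmeas : Measurable fun z : ℝ × ℝ => ENNReal.ofReal (f (z.1 - z.2)) :=
    (((convex_continuous hfconv).comp
      (continuous_fst.sub continuous_snd)).measurable).ennreal_ofReal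
  rw [lintegral_congr hpt, lintegral_congr hpt,
    lintegral_add_left measurable_const, lintegral_add_left measurable_const,
    lintegral_const, lintegral_const, measure_univ, measure_univ]
  exact add_le_add_right (CP_gen_right μ ν π hπ1 hπ2 hfconv hfm hf0 hflim) _

lemma CP_anti_case {c : ℝ → ℝ} (hc : ConvexOn ℝ univ c) (hnn : ∀ z, 0 ≤ c z)
    (hanti : Antitone c) :
    ∫⁻ z, ENNReal.ofReal (c (z.1 - z.2)) ∂(piHat μ ν)
      ≤ ∫⁻ z, ENNReal.ofReal (c (z.1 - z.2)) ∂π := by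
  haveI := coupling_isProbability μ π hπ1
  set d := fun u => c (-u) with hd
  have hdconv : ConvexOn ℝ univ d := convexOn_comp_neg hc
  have hdm : Monotone d := fun x y hxy => hanti (neg_le_neg hxy)
  have hdnn : ∀ u, 0 ≤ d u := fun u => hnn (-u)
  set κ := ⨅ u, d u with hκ
  have hbdd : BddBelow (range d) := ⟨0, by rintro _ ⟨u, rfl⟩; exact hdnn u⟩
  have hκ0 : 0 ≤ κ := le_ciInf fun u => hdnn u
  have hκle : ∀ u, κ ≤ d u := fun u => ciInf_le hbdd u
  set f := fun u => d u - κ with hfdef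
  have hfconv : ConvexOn ℝ univ f := convexOn_sub_const hdconv κ
  have hfm : Monotone f := fun x y hxy => sub_le_sub_right (hdm hxy) κ
  have hf0 : ∀ u, 0 ≤ f u := fun u => sub_nonneg.2 (hκle u)
  have hflim : Tendsto f atBot (𝓝 (0:ℝ)) := by
    have h := (tendsto_atBot_ciInf hdm hbdd).sub_const κ
    simpa [hκ] using h
  have hpt : ∀ z : ℝ × ℝ, ENNReal.ofReal (c (z.1 - z.2))
      = ENNReal.ofReal κ + ENNReal.ofReal (f (z.2 - z.1)) := by
    intro z
    rw [← ENNReal.ofReal_add hκ0 (hf0 _)]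
    congr 1
    rw [hfdef]
    simp only [hd, neg_sub]
    ring
  have hfmeas : Measurable fun z : ℝ × ℝ => ENNReal.ofReal (f (z.2 - z.1)) :=
    (((convex_continuous hfconv).comp
      (continuous_snd.sub continuous_fst)).measurable).ennreal_ofReal
  rw [lintegral_congr hpt, lintegral_congr hpt,
    lintegral_add_left measurable_const, lintegral_add_left measurable_const,
    lintegral_const, lintegral_const, measure_univ, measure_univ]
  exact add_le_add_right (CP_gen_left μ ν π hπ1 hπ2 hfconv hfm hf0 hflim) _

lemma CP_mixed_case {c : ℝ → ℝ} (hc : ConvexOn ℝ univ c) (hnn : ∀ z, 0 ≤ c z)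
    {x₀ : ℝ} (hx₀ : 0 ≤ rderiv c x₀) (hBdd : BddBelow {x | 0 ≤ rderiv c x}) :
    ∫⁻ z, ENNReal.ofReal (c (z.1 - z.2)) ∂(piHat μ ν)
      ≤ ∫⁻ z, ENNReal.ofReal (c (z.1 - z.2)) ∂π := by
  haveI := coupling_isProbability μ π hπ1
  have hcont : Continuous c := convex_continuous hc
  have hWne : Set.Nonempty {x | 0 ≤ rderiv c x} := ⟨x₀, hx₀⟩
  set w := sInf {x | 0 ≤ rderiv c x} with hw
  have hneg : ∀ y, y < w → rderiv c y < 0 := by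
    intro y hy
    by_contra hcon
    push_neg at hcon
    exact absurd (csInf_le hBdd hcon) (not_le.2 hy)
  have hstep : ∀ x y : ℝ, w < x → x ≤ y → c x ≤ c y := by
    intro x y hwx hxy
    rcases eq_or_lt_of_le hxy with rfl | hxy
    · exact le_refl _
    obtain ⟨v, hvW, hvx⟩ := exists_lt_of_csInf_lt hWne hwx
    have h1 : (0:ℝ) ≤ rderiv c x := le_trans hvW (rderiv_mono hc hvx.le)
    have h2 : 0 ≤ slope c x y := le_trans h1 (rderiv_le_slope hc hxy)
    rw [slope_def_field] at h2
    rcases div_nonneg_iff.1 h2 with ⟨hnum, _⟩ | ⟨_, hden⟩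
    · linarith
    · linarith
  have hmIci : MonotoneOn c (Ici w) := by
    intro x hx y hy hxy
    rcases eq_or_lt_of_le (mem_Ici.1 hx) with heq | hwx
    · subst heq
      rcases eq_or_lt_of_le hxy with rfl | hxy
      · exact le_refl _
      apply le_of_tendsto ((hcont.tendsto w).mono_left
        (nhdsWithin_le_nhds (s := Ioi w)))
      filter_upwards [Ioo_mem_nhdsGT hxy] with x' hx'
      exact hstep x' y hx'.1 hx'.2.le
    · exact hstep x y hwx hxy
  have hstepL : ∀ x y : ℝ, x ≤ y → y < w → c y ≤ c x := by
    intro x y hxy hyw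
    rcases eq_or_lt_of_le hxy with rfl | hxy
    · exact le_refl _
    have h1 : slope c x y ≤ rderiv c y := slope_le_rderiv hc hxy
    have h2 : slope c x y < 0 := lt_of_le_of_lt h1 (hneg y hyw)
    rw [slope_def_field, div_neg_iff] at h2
    rcases h2 with ⟨_, h2⟩ | ⟨h2, _⟩ <;> linarith
  have haIic : AntitoneOn c (Iic w) := by
    intro x hx y hy hxy
    rcases eq_or_lt_of_le (mem_Iic.1 hy) with heq | hyw
    · subst heq
      rcases eq_or_lt_of_le hxy with rfl | hxy
      · exact le_refl _
      apply le_of_tendsto ((hcont.tendsto w).mono_left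
        (nhdsWithin_le_nhds (s := Iio w)))
      filter_upwards [Ioo_mem_nhdsLT hxy] with y' hy'
      exact hstepL x y' hy'.1.le hy'.2
    · exact hstepL x y hxy hyw
  -- the right part
  set cR := fun u => c (max u w) - c w with hcR
  have hconvR : ConvexOn ℝ univ cR := convexOn_sub_const (convexOn_comp_max hc hmIci) _
  have hmR : Monotone cR := fun u v huv => by
    apply sub_le_sub_right
    exact hmIci (mem_Ici.2 (le_max_right u w)) (mem_Ici.2 (le_max_right v w))
      (max_le_max huv (le_refl w))
  have h0R : ∀ u, 0 ≤ cR u := fun u => sub_nonneg.2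
    (hmIci (mem_Ici.2 (le_refl w)) (mem_Ici.2 (le_max_right u w)) (le_max_right u w))
  have hlimR : Tendsto cR atBot (𝓝 (0:ℝ)) := by
    have hev : (fun _ : ℝ => (0:ℝ)) =ᶠ[atBot] cR := by
      filter_upwards [eventually_le_atBot w] with u hu
      rw [hcR]
      dsimp only
      rw [max_eq_right hu]
      ring
    exact Tendsto.congr' hev tendsto_const_nhds
  -- the left part
  set d := fun u => c (-u) with hd
  have hdconv : ConvexOn ℝ univ d := convexOn_comp_neg hc
  have hdmIci : MonotoneOn d (Ici (-w)) := by
    intro x hx y hy hxy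
    exact haIic (mem_Iic.2 (by linarith [mem_Ici.1 hy] : -y ≤ w))
      (mem_Iic.2 (by linarith [mem_Ici.1 hx] : -x ≤ w)) (by linarith)
  set cL := fun u => d (max u (-w)) - d (-w) with hcL
  have hconvL : ConvexOn ℝ univ cL := convexOn_sub_const (convexOn_comp_max hdconv hdmIci) _
  have hmL : Monotone cL := fun u v huv => by
    apply sub_le_sub_right
    exact hdmIci (mem_Ici.2 (le_max_right u (-w))) (mem_Ici.2 (le_max_right v (-w)))
      (max_le_max huv (le_refl (-w)))
  have h0L : ∀ u, 0 ≤ cL u := fun u => sub_nonneg.2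
    (hdmIci (mem_Ici.2 (le_refl (-w))) (mem_Ici.2 (le_max_right u (-w))) (le_max_right u (-w)))
  have hlimL : Tendsto cL atBot (𝓝 (0:ℝ)) := by
    have hev : (fun _ : ℝ => (0:ℝ)) =ᶠ[atBot] cL := by
      filter_upwards [eventually_le_atBot (-w)] with u hu
      rw [hcL]
      dsimp only
      rw [max_eq_right hu]
      ring
    exact Tendsto.congr' hev tendsto_const_nhds
  -- the decomposition
  have hid : ∀ u, c u = c w + cR u + cL (-u) := by
    intro u
    rcases le_total u w with h | h
    · have h1 : cR u = 0 := by
        rw [hcR]; dsimp only; rw [max_eq_right h]; ring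
      have h2 : cL (-u) = c u - c w := by
        rw [hcL]; dsimp only; rw [max_eq_left (neg_le_neg h)]
        simp only [hd, neg_neg]
      rw [h1, h2]; ring
    · have h1 : cR u = c u - c w := by
        rw [hcR]; dsimp only; rw [max_eq_left h]
      have h2 : cL (-u) = 0 := by
        rw [hcL]; dsimp only; rw [max_eq_right (neg_le_neg h)]; ring
      rw [h1, h2]; ring
  have hpt : ∀ z : ℝ × ℝ, ENNReal.ofReal (c (z.1 - z.2))
      = ENNReal.ofReal (c w) + ENNReal.ofReal (cR (z.1 - z.2))
        + ENNReal.ofReal (cL (z.2 - z.1)) := by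
    intro z
    rw [← ENNReal.ofReal_add (hnn w) (h0R _),
      ← ENNReal.ofReal_add (add_nonneg (hnn w) (h0R _)) (h0L _)]
    congr 1
    have h := hid (z.1 - z.2)
    rw [show z.2 - z.1 = -(z.1 - z.2) by ring]
    linarith
  have hmeasR : Measurable fun z : ℝ × ℝ => ENNReal.ofReal (cR (z.1 - z.2)) :=
    (((convex_continuous hconvR).comp
      (continuous_fst.sub continuous_snd)).measurable).ennreal_ofReal
  rw [lintegral_congr hpt, lintegral_congr hpt,
    lintegral_add_left (show Measurable fun z : ℝ × ℝ => ENNReal.ofReal (c w) + ENNReal.ofReal (cR (z.1 - z.2)) from measurable_const.add hmeasR),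
    lintegral_add_left (show Measurable fun z : ℝ × ℝ => ENNReal.ofReal (c w) + ENNReal.ofReal (cR (z.1 - z.2)) from measurable_const.add hmeasR),
    lintegral_add_left (measurable_const : Measurable fun _ : ℝ × ℝ =>
      ENNReal.ofReal (c w)),
    lintegral_add_left (measurable_const : Measurable fun _ : ℝ × ℝ =>
      ENNReal.ofReal (c w)),
    lintegral_const, lintegral_const, measure_univ, measure_univ]
  apply add_le_add
  · exact add_le_add_right (CP_gen_right μ ν π hπ1 hπ2 hconvR hmR h0R hlimR) _
  · exact CP_gen_left μ ν π hπ1 hπ2 hconvL hmL h0L hlimL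

lemma CP_convex {c : ℝ → ℝ} (hc : ConvexOn ℝ univ c) (hnn : ∀ z, 0 ≤ c z) :
    ∫⁻ z, ENNReal.ofReal (c (z.1 - z.2)) ∂(piHat μ ν)
      ≤ ∫⁻ z, ENNReal.ofReal (c (z.1 - z.2)) ∂π := by
  by_cases hall : ∀ x, rderiv c x < 0
  · exact CP_anti_case μ ν π hπ1 hπ2 hc hnn (antitone_of_rderiv_neg hc hall)
  · push_neg at hall
    obtain ⟨x₀, hx₀⟩ := hall
    by_cases hBdd : BddBelow {x | 0 ≤ rderiv c x}
    · exact CP_mixed_case μ ν π hπ1 hπ2 hc hnn hx₀ hBdd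
    · apply CP_mono_case μ ν π hπ1 hπ2 hc hnn
      apply monotone_of_rderiv_unbdd hc
      intro b
      rw [not_bddBelow_iff] at hBdd
      obtain ⟨v, hvW, hvb⟩ := hBdd b
      exact ⟨v, hvb.le, hvW⟩

end CPMain

theorem one_dim_transport_convex_cost (c : ℝ → ℝ)
    (hconv : ConvexOn ℝ Set.univ c) (hnn : ∀ z, 0 ≤ c z)
    (μ ν : Measure ℝ) [IsProbabilityMeasure μ] [IsProbabilityMeasure ν]
    (hint : ∀ π : Measure (ℝ × ℝ), π.map Prod.fst = μ → π.map Prod.snd = ν →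
      Integrable (fun z : ℝ × ℝ => c (z.1 - z.2)) π)
    (hq : IntervalIntegrable (fun t => c (quantile μ t - quantile ν t)) volume 0 1) :
    Wcost (fun s t : ℝ => c (s - t)) μ ν
      = ∫ t in (0 : ℝ)..1, c (quantile μ t - quantile ν t) := by
  have hccont : Continuous c := convex_continuous hconv
  have h1 := piHat_fst μ ν
  have h2 := piHat_snd μ ν
  set rhat := ∫ z : ℝ × ℝ, c (z.1 - z.2) ∂(piHat μ ν) with hrhat
  have hlow : ∀ (π : Measure (ℝ × ℝ)), π.map Prod.fst = μ → π.map Prod.snd = ν →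
      rhat ≤ ∫ z : ℝ × ℝ, c (z.1 - z.2) ∂π := by
    intro π hπ1 hπ2
    haveI := coupling_isProbability μ π hπ1
    have hCP := CP_convex μ ν π hπ1 hπ2 hconv hnn
    have hintπ := hint π hπ1 hπ2
    have heq : ∀ (ρ : Measure (ℝ × ℝ)), ∫ z : ℝ × ℝ, c (z.1 - z.2) ∂ρ
        = (∫⁻ z : ℝ × ℝ, ENNReal.ofReal (c (z.1 - z.2)) ∂ρ).toReal := fun ρ =>
      integral_eq_lintegral_of_nonneg_ae (ae_of_all _ fun z => hnn _)
        ((hccont.comp (continuous_fst.sub continuous_snd)).aestronglyMeasurable)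
    rw [hrhat, heq, heq]
    apply ENNReal.toReal_mono _ hCP
    have hfin := hintπ.hasFiniteIntegral
    rw [hasFiniteIntegral_iff_ofReal (ae_of_all _ fun z => hnn _)] at hfin
    exact hfin.ne
  have hmem : ∀ (r : ℝ), r ∈ {r : ℝ | ∃ π : Measure (ℝ × ℝ),
      π.map Prod.fst = μ ∧ π.map Prod.snd = ν ∧
        r = ∫ z : ℝ × ℝ, (fun s t : ℝ => c (s - t)) z.1 z.2 ∂π} → rhat ≤ r := by
    rintro r ⟨π, hπ1, hπ2, rfl⟩
    exact hlow π hπ1 hπ2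
  have hWc : Wcost (fun s t : ℝ => c (s - t)) μ ν = rhat := by
    rw [Wcost]
    apply le_antisymm
    · exact csInf_le ⟨rhat, hmem⟩ ⟨piHat μ ν, h1, h2, rfl⟩
    · exact le_csInf ⟨rhat, ⟨piHat μ ν, h1, h2, rfl⟩⟩ hmem
  rw [hWc]
  have hsm : AEStronglyMeasurable (fun z : ℝ × ℝ => c (z.1 - z.2))
      (unif01.map (fun t => (Qm μ t, Qm ν t))) :=
    (hccont.comp (continuous_fst.sub continuous_snd)).aestronglyMeasurable
  calc rhat = ∫ t, c (Qm μ t - Qm ν t) ∂unif01 := by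
        rw [hrhat, piHat, integral_map (measurable_Qm_pair μ ν).aemeasurable hsm]
    _ = ∫ t in Ioo (0:ℝ) 1, c (quantile μ t - quantile ν t) ∂volume := by
        rw [unif01]
        apply setIntegral_congr_fun measurableSet_Ioo
        intro t ht
        dsimp only
        rw [Qm_eq μ ht, Qm_eq ν ht]
    _ = ∫ t in (0:ℝ)..1, c (quantile μ t - quantile ν t) := by
        rw [intervalIntegral.integral_of_le (by norm_num : (0:ℝ) ≤ 1),
          integral_Ioc_eq_integral_Ioo]
end ConvexHelpers
end Slicing
end
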